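/- For every finite simple graph G, the neighborhood diversity satisfies nd(G) ≤ vc(G) + 2^{vc(G)}, where vc(G) is the vertex cover number. -/

import Mathlib

/-- Two vertices `u`, `v` are twins: `N(u) \ {v} = N(v) \ {u}`. -/
def Twins {V : Type*} (G : SimpleGraph V) (u v : V) : Prop :=
  G.neighborSet u \ {v} = G.neighborSet v \ {u}

/-- The twin class of a vertex `v`. -/
def twinClass {V : Type*} (G : SimpleGraph V) (v : V) : Set V :=
  {u | u = v ∨ Twins G u v}

/-- The neighborhood diversity of `G`: the number of twin classes. -/
noncomputable def nd {V : Type*} (G : SimpleGraph V) : ℕ :=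
  {C : Set V | ∃ v, C = twinClass G v}.ncard

/-- The vertex cover number of `G`. -/
noncomputable def vc {V : Type*} (G : SimpleGraph V) : ℕ :=
  sInf {n | ∃ S : Set V, (∀ u v : V, G.Adj u v → u ∈ S ∨ v ∈ S) ∧ S.ncard = n}

lemma twins_iff {V : Type*} (G : SimpleGraph V) (u v : V) :
    Twins G u v ↔ ∀ w, w ≠ u → w ≠ v → (G.Adj u w ↔ G.Adj v w) := by
  unfold Twins
  rw [Set.ext_iff]
  constructor
  · intro h w hwu hwv
    have := h w
    simp only [Set.mem_diff, SimpleGraph.mem_neighborSet, Set.mem_singleton_iff,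
      hwu, hwv, not_false_eq_true, and_true] at this
    exact this
  · intro h w
    simp only [Set.mem_diff, SimpleGraph.mem_neighborSet, Set.mem_singleton_iff]
    by_cases hwu : w = u
    · subst hwu
      constructor
      · rintro ⟨h1, -⟩; exact absurd h1 (G.irrefl)
      · rintro ⟨-, h2⟩; exact absurd rfl h2
    · by_cases hwv : w = v
      · subst hwv
        constructor
        · rintro ⟨-, h2⟩; exact absurd rfl h2
        · rintro ⟨h1, -⟩; exact absurd h1 (G.irrefl)
      · simp only [hwu, hwv, not_false_eq_true, and_true]
        exact h w hwu hwv

lemma twins_refl {V : Type*} (G : SimpleGraph V) (u : V) : Twins G u u := rfl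

lemma twins_symm {V : Type*} (G : SimpleGraph V) {u v : V} (h : Twins G u v) :
    Twins G v u := h.symm

lemma twins_trans {V : Type*} (G : SimpleGraph V) {u v w : V}
    (h1 : Twins G u v) (h2 : Twins G v w) : Twins G u w := by
  rw [twins_iff] at h1 h2 ⊢
  intro x hxu hxw
  by_cases hxv : x = v
  · subst hxv
    by_cases huw : u = w
    · subst huw; rfl
    have hA : G.Adj x u ↔ G.Adj w u := h2 u (Ne.symm hxu) huw
    have hB : G.Adj u w ↔ G.Adj x w := h1 w (fun h => huw h.symm) (Ne.symm hxw)
    calc G.Adj u x ↔ G.Adj x u := G.adj_comm u x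
      _ ↔ G.Adj w u := hA
      _ ↔ G.Adj u w := G.adj_comm w u
      _ ↔ G.Adj x w := hB
      _ ↔ G.Adj w x := G.adj_comm x w
  · exact (h1 x hxu hxv).trans (h2 x hxv hxw)

lemma twinClass_eq_of_twins {V : Type*} {G : SimpleGraph V} {u v : V}
    (h : Twins G u v) : twinClass G u = twinClass G v := by
  ext x
  constructor
  · rintro (rfl | hx)
    · exact Or.inr h
    · exact Or.inr (twins_trans G hx h)
  · rintro (rfl | hx)
    · exact Or.inr (twins_symm G h)
    · exact Or.inr (twins_trans G hx (twins_symm G h))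

lemma twinClass_eq_of_mem {V : Type*} {G : SimpleGraph V} {u v : V}
    (h : u ∈ twinClass G v) : twinClass G u = twinClass G v := by
  rcases h with rfl | h
  · rfl
  · exact twinClass_eq_of_twins h

lemma mem_twinClass_self {V : Type*} (G : SimpleGraph V) (v : V) :
    v ∈ twinClass G v := Or.inl rfl

/-- For vertices outside a vertex cover, equal neighborhoods give equal twin classes. -/
lemma twinClass_eq_outside {V : Type*} {G : SimpleGraph V} {S : Set V}
    (hScov : ∀ u v : V, G.Adj u v → u ∈ S ∨ v ∈ S) {v1 v2 : V}
    (h1 : v1 ∉ S) (h2 : v2 ∉ S) (hN : G.neighborSet v1 = G.neighborSet v2) :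
    twinClass G v1 = twinClass G v2 := by
  have hnadj : ¬ G.Adj v1 v2 := by
    intro h
    rcases hScov _ _ h with h' | h'
    · exact h1 h'
    · exact h2 h'
  have ha : v2 ∉ G.neighborSet v1 := hnadj
  have hb : v1 ∉ G.neighborSet v2 := fun h => hnadj (G.adj_symm h)
  refine twinClass_eq_of_twins ?_
  unfold Twins
  rw [Set.diff_singleton_eq_self ha, Set.diff_singleton_eq_self hb, hN]

/-- `nd(G) ≤ vc(G) + 2^{vc(G)}`. -/
theorem stmt14 {V : Type*} [Fintype V] (G : SimpleGraph V) :
    nd G ≤ vc G + 2 ^ vc G := by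
  classical
  have hne : {n | ∃ S : Set V, (∀ u v : V, G.Adj u v → u ∈ S ∨ v ∈ S) ∧ S.ncard = n}.Nonempty :=
    ⟨(Set.univ : Set V).ncard, Set.univ, fun u v _ => Or.inl (Set.mem_univ u), rfl⟩
  obtain ⟨S, hScov, hScard⟩ := Nat.sInf_mem hne
  have hk : S.ncard = vc G := hScard
  set Cls : Set (Set V) := {C | ∃ v, C = twinClass G v} with hCls
  set A : Set (Set V) := Cls ∩ {C | (C ∩ S).Nonempty} with hA
  set B : Set (Set V) := Cls ∩ {C | C ∩ S = ∅} with hB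
  have hsplit : Cls = A ∪ B := by
    ext C
    simp only [hA, hB, Set.mem_union, Set.mem_inter_iff, Set.mem_setOf_eq]
    by_cases h : (C ∩ S).Nonempty
    · tauto
    · have := Set.not_nonempty_iff_eq_empty.mp h
      tauto
  -- bound A : every class meeting S is the class of one of its members in S
  have hAsub : A ⊆ (twinClass G) '' S := by
    rintro C ⟨⟨a, rfl⟩, s, hsC, hsS⟩
    exact ⟨s, hsS, twinClass_eq_of_mem hsC⟩
  have hAcard : A.ncard ≤ S.ncard := by
    calc A.ncard ≤ ((twinClass G) '' S).ncard :=
          Set.ncard_le_ncard hAsub (S.toFinite.image _)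
      _ ≤ S.ncard := Set.ncard_image_le S.toFinite
  -- bound B : classes avoiding S are determined by the (common) neighborhood of
  -- their members, which is a subset of S
  set m : Finset V → Set V := fun W =>
    if h : ∃ v, v ∉ S ∧ (G.neighborSet v).toFinset = W then twinClass G h.choose
    else ∅ with hm
  have key : ∀ (W : Finset V) (h : ∃ v, v ∉ S ∧ (G.neighborSet v).toFinset = W),
      m W = twinClass G h.choose := fun W h => dif_pos h
  have hBsub : B ⊆ m '' ↑S.toFinset.powerset := by
    rintro C ⟨⟨v, rfl⟩, hdisj⟩
    have hvC : v ∈ twinClass G v := mem_twinClass_self G v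
    have hvS : v ∉ S := fun h =>
      (Set.eq_empty_iff_forall_notMem.mp hdisj v) ⟨hvC, h⟩
    have hsubS : G.neighborSet v ⊆ S := by
      intro w hw
      rcases hScov _ _ hw with h | h
      · exact absurd h hvS
      · exact h
    refine ⟨(G.neighborSet v).toFinset, ?_, ?_⟩
    · simp only [Finset.mem_coe, Finset.mem_powerset]
      rw [Set.toFinset_subset_toFinset]
      exact hsubS
    · have hw : ∃ u, u ∉ S ∧ (G.neighborSet u).toFinset = (G.neighborSet v).toFinset :=
        ⟨v, hvS, rfl⟩
      rw [key _ hw]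
      have hw1 := hw.choose_spec.1
      have hw2 : G.neighborSet hw.choose = G.neighborSet v := by
        have := hw.choose_spec.2
        rwa [Set.toFinset_inj] at this
      exact twinClass_eq_outside hScov hw1 hvS hw2
  have hBcard : B.ncard ≤ 2 ^ S.ncard := by
    calc B.ncard ≤ (m '' ↑S.toFinset.powerset).ncard :=
          Set.ncard_le_ncard hBsub ((S.toFinset.powerset.finite_toSet).image _)
      _ ≤ (↑S.toFinset.powerset : Set (Finset V)).ncard :=
          Set.ncard_image_le (S.toFinset.powerset.finite_toSet)
      _ = 2 ^ S.ncard := by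
          rw [Set.ncard_coe_finset, Finset.card_powerset, Set.ncard_eq_toFinset_card']
  have hmain : nd G ≤ A.ncard + B.ncard := by
    rw [nd, ← hCls, hsplit]
    exact Set.ncard_union_le A B
  calc nd G ≤ A.ncard + B.ncard := hmain
    _ ≤ S.ncard + 2 ^ S.ncard := Nat.add_le_add hAcard hBcard
    _ = vc G + 2 ^ vc G := by rw [hk]
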